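/- arXiv:2307.16011 — 5 statements merged into one kernel-verified Lean document; each statement's English description precedes it below -/
import Mathlib

section
/- Let a < b be reals and γ ≥ δ > 0. Then for every real x, the indicator 1_{[a,b]}(x) is bounded above by (1 + 2δ/γ)·(1/π)·∫_{a−γ}^{b+γ} Im(1/(x − λ − iδ)) dλ. -/
open intervalIntegral Real

/-!
The imaginary part of `1 / (x - λ - iδ)` is the Poisson kernel `δ / ((λ - x)² + δ²)`, whose
antiderivative in `λ` is `arctan ((λ - x) / δ)`. Off `[a, b]` the integral of this positive kernel is
nonnegative. On `[a, b]` both endpoints of `[a - γ, b + γ]` lie at distance at least `γ` from `x`, and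
`arctan t ≥ π / 2 - 1 / t` bounds the integral below by `π - 2s` with `s = δ / γ ∈ (0, 1]`; finally
`(1 + 2s) (π - 2s) ≥ π` because `π > 3 ≥ 1 + 2s`.
-/

lemma arctan_le_self_of_nonneg {t : ℝ} (ht : 0 ≤ t) : arctan t ≤ t :=
  calc arctan t ≤ tan (arctan t) := le_tan (arctan_nonneg.mpr ht) (arctan_lt_pi_div_two t)
    _ = t := tan_arctan t

lemma pi_div_two_sub_inv_le_arctan {t : ℝ} (ht : 0 < t) : π / 2 - t⁻¹ ≤ arctan t := by
  have h := arctan_inv_of_pos ht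
  have := arctan_le_self_of_nonneg (inv_nonneg.mpr ht.le)
  linarith

lemma pi_div_two_sub_div_le_arctan_div {u γ δ : ℝ} (hγ : 0 < γ) (hδ : 0 < δ) (hu : γ ≤ u) :
    π / 2 - δ / γ ≤ arctan (u / δ) := by
  have hinv : (u / δ)⁻¹ ≤ δ / γ := by
    rw [inv_div]
    gcongr
  have := pi_div_two_sub_inv_le_arctan (div_pos (hγ.trans_le hu) hδ)
  linarith

lemma pi_le_one_add_two_mul_mul_pi_sub {s : ℝ} (hs₀ : 0 ≤ s) (hs₁ : s ≤ 1) :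
    π ≤ (1 + 2 * s) * (π - 2 * s) := by
  nlinarith [pi_gt_three]

lemma im_inv_sub_sub_mul_I (x lam δ : ℝ) :
    (((x : ℂ) - lam - δ * Complex.I)⁻¹).im = δ / ((lam - x) ^ 2 + δ ^ 2) := by
  rw [Complex.inv_im, Complex.normSq_apply]
  simp only [Complex.sub_re, Complex.sub_im, Complex.ofReal_re, Complex.ofReal_im,
    Complex.mul_re, Complex.mul_im, Complex.I_re, Complex.I_im]
  ring

lemma hasDerivAt_arctan_sub_div (x δ lam : ℝ) (hδ : δ ≠ 0) :
    HasDerivAt (fun t => arctan ((t - x) / δ)) (δ / ((lam - x) ^ 2 + δ ^ 2)) lam := by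
  refine (((hasDerivAt_id' lam).sub_const x).div_const δ).arctan.congr_deriv ?_
  field_simp
  ring

lemma integral_div_sub_sq_add_sq (x δ p q : ℝ) (hδ : δ ≠ 0) :
    ∫ lam in p..q, δ / ((lam - x) ^ 2 + δ ^ 2) = arctan ((q - x) / δ) - arctan ((p - x) / δ) := by
  refine integral_eq_sub_of_hasDerivAt (fun lam _ => hasDerivAt_arctan_sub_div x δ lam hδ) ?_
  refine Continuous.intervalIntegrable ?_ p q
  exact continuous_const.div (by fun_prop) fun t => by positivity

/-- For `a < b`, `γ ≥ δ > 0` and every real `x`,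
`1_{[a,b]}(x) ≤ (1 + 2δ/γ) (1/π) ∫_{a-γ}^{b+γ} Im (1/(x - λ - iδ)) dλ`. -/
theorem stmt4 (a b γ δ : ℝ) (hab : a < b) (hδ : 0 < δ) (hγδ : δ ≤ γ) (x : ℝ) :
    Set.indicator (Set.Icc a b) (fun _ => (1 : ℝ)) x ≤
      (1 + 2 * δ / γ) * (1 / Real.pi) *
        ∫ lam in (a - γ)..(b + γ), (((x : ℂ) - lam - δ * Complex.I)⁻¹).im := by
  have hγ : 0 < γ := hδ.trans_le hγδ
  simp only [im_inv_sub_sub_mul_I, integral_div_sub_sq_add_sq x δ _ _ hδ.ne']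
  rw [mul_div_assoc, mul_one_div, ← mul_div_right_comm, le_div_iff₀ pi_pos]
  by_cases hx : x ∈ Set.Icc a b
  · rw [Set.indicator_of_mem hx, one_mul]
    have hright := pi_div_two_sub_div_le_arctan_div hγ hδ (by linarith [hx.2] : γ ≤ b + γ - x)
    have hleft := pi_div_two_sub_div_le_arctan_div hγ hδ (by linarith [hx.1] : γ ≤ x + γ - a)
    rw [show x + γ - a = -(a - γ - x) by ring, neg_div, arctan_neg] at hleft
    calc π ≤ (1 + 2 * (δ / γ)) * (π - 2 * (δ / γ)) :=
          pi_le_one_add_two_mul_mul_pi_sub (by positivity) ((div_le_one hγ).mpr hγδ)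
      _ ≤ _ := mul_le_mul_of_nonneg_left (by linarith) (by positivity)
  · rw [Set.indicator_of_notMem hx, zero_mul]
    have hmono : arctan ((a - γ - x) / δ) ≤ arctan ((b + γ - x) / δ) :=
      arctan_le_arctan_iff.mpr (by gcongr; linarith)
    exact mul_nonneg (by positivity) (sub_nonneg.mpr hmono)
end

section
/- Let X be an N×N real symmetric matrix, let a < b, γ ≥ δ > 0, and let P denote the orthogonal projection onto the span of eigenvectors of X with eigenvalues in [a,b]. Then in the positive semidefinite order, P ≤ (1 + 2δ/γ)·(1/π)·Im ∫_{a−γ}^{b+γ} (X − λ − iδ)^{-1} dλ, where Im M := (M − M*)/(2i). -/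
/-!
Conjugating by the complexified eigenvector unitary `U` of `X` turns the resolvent integral,
its imaginary part and the spectral projection into `U D Uᴴ` with `D` diagonal, so the claim
reduces to one scalar inequality per eigenvalue `E`. There the imaginary part of the integral is
`arctan ((b + γ - E) / δ) - arctan ((a - γ - E) / δ)`, the angle under which the window
`[a - γ, b + γ]` is seen from `E + iδ`; since `arctan x⁻¹ ≥ π / 2 - x` for `x > 0`, this angle is
at least `π - 2δ/γ` when `E ∈ [a, b]`, and `(1 + 2t)(π - 2t) ≥ π` for `0 ≤ t ≤ 1`.
-/

open Matrix intervalIntegral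
open scoped ComplexOrder

/-- The orthogonal projection onto the span of the eigenvectors of a symmetric matrix `X`
with eigenvalues in `[a, b]`, given by the spectral theorem. -/
noncomputable def specProj {N : ℕ} (X : Matrix (Fin N) (Fin N) ℝ) (hX : X.IsHermitian)
    (a b : ℝ) : Matrix (Fin N) (Fin N) ℝ :=
  (hX.eigenvectorUnitary : Matrix (Fin N) (Fin N) ℝ) *
    Matrix.diagonal (fun i => if hX.eigenvalues i ∈ Set.Icc a b then (1 : ℝ) else 0) *
    star (hX.eigenvectorUnitary : Matrix (Fin N) (Fin N) ℝ)

/-- The imaginary part `(M - Mᴴ)/(2i)` of a complex matrix. -/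
noncomputable def matIm {N : ℕ} (M : Matrix (Fin N) (Fin N) ℂ) : Matrix (Fin N) (Fin N) ℂ :=
  (2 * Complex.I)⁻¹ • (M - Mᴴ)

/-- The (entrywise) integral of the resolvent `(X - λ - iδ)⁻¹` for `λ ∈ [s, t]`. -/
noncomputable def resolventInt {N : ℕ} (X : Matrix (Fin N) (Fin N) ℝ) (δ s t : ℝ) :
    Matrix (Fin N) (Fin N) ℂ :=
  Matrix.of fun i j => ∫ lam in s..t,
    ((X.map (fun r => (r : ℂ)) - ((lam : ℂ) + δ * Complex.I) • (1 : Matrix (Fin N) (Fin N) ℂ))⁻¹) i j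

namespace Real

lemma arctan_le_self {x : ℝ} (hx : 0 ≤ x) : arctan x ≤ x := by
  simpa [tan_arctan] using le_tan (arctan_nonneg.2 hx) (arctan_lt_pi_div_two x)

lemma pi_div_two_sub_le_arctan_inv {t : ℝ} (ht : 0 < t) : π / 2 - t ≤ arctan t⁻¹ := by
  rw [arctan_inv_of_pos ht]
  linarith [arctan_le_self ht.le]

lemma indicator_le_arctan_window {a b γ δ E : ℝ} (hab : a ≤ b) (hδ : 0 < δ) (hγδ : δ ≤ γ) :
    (if E ∈ Set.Icc a b then (1 : ℝ) else 0) ≤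
      (1 + 2 * δ / γ) * (1 / π) * (arctan ((b + γ - E) / δ) - arctan ((a - γ - E) / δ)) := by
  have hγ : 0 < γ := hδ.trans_le hγδ
  split_ifs with hE
  · obtain ⟨haE, hEb⟩ := hE
    rw [mul_div_assoc]
    set t := δ / γ with ht
    have ht0 : 0 < t := by positivity
    have ht1 : t ≤ 1 := (div_le_one hγ).2 hγδ
    have hwindow : ∀ w, γ ≤ w → π / 2 - t ≤ arctan (w / δ) := fun w hw =>
      (pi_div_two_sub_le_arctan_inv ht0).trans
        (arctan_le_arctan_iff.2 (by rw [ht, inv_div]; gcongr))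
    have hright := hwindow (b + γ - E) (by linarith)
    have hleft := hwindow (E - (a - γ)) (by linarith)
    rw [show (a - γ - E) / δ = -((E - (a - γ)) / δ) by ring, arctan_neg, sub_neg_eq_add,
      show ∀ S, (1 + 2 * t) * (1 / π) * S = (1 + 2 * t) * S / π by intro S; ring,
      le_div_iff₀ pi_pos]
    nlinarith [pi_gt_three]
  · have hmono : arctan ((a - γ - E) / δ) ≤ arctan ((b + γ - E) / δ) :=
      arctan_le_arctan_iff.2 (by gcongr; linarith)
    exact mul_nonneg (by positivity) (sub_nonneg.2 hmono)

end Real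

namespace Complex

lemma ofReal_sub_ofReal_add_mul_I_ne_zero {E δ : ℝ} (hδ : δ ≠ 0) (x : ℝ) :
    (E : ℂ) - (x + δ * I) ≠ 0 := by
  intro h
  have := congrArg im h
  simp [hδ] at this

lemma continuous_inv_ofReal_sub_ofReal_add_mul_I {E δ : ℝ} (hδ : δ ≠ 0) :
    Continuous fun x : ℝ => ((E : ℂ) - (x + δ * I))⁻¹ :=
  (by fun_prop : Continuous fun x : ℝ => (E : ℂ) - (x + δ * I)).inv₀
    (ofReal_sub_ofReal_add_mul_I_ne_zero hδ)

lemma im_inv_ofReal_sub_ofReal_add_mul_I (E δ x : ℝ) :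
    (((E : ℂ) - (x + δ * I))⁻¹).im = δ / ((x - E) ^ 2 + δ ^ 2) := by
  rw [inv_im, normSq_apply]
  simp only [sub_re, ofReal_re, add_re, mul_re, I_re, I_im, ofReal_im, sub_im, add_im, mul_im]
  ring_nf

lemma integral_im_inv_ofReal_sub_ofReal_add_mul_I {δ : ℝ} (hδ : 0 < δ) (E s t : ℝ) :
    (∫ x in s..t, ((E : ℂ) - (x + δ * I))⁻¹).im =
      Real.arctan ((t - E) / δ) - Real.arctan ((s - E) / δ) := by
  have hint : IntervalIntegrable (fun x : ℝ => ((E : ℂ) - (x + δ * I))⁻¹) MeasureTheory.volume s t :=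
    (continuous_inv_ofReal_sub_ofReal_add_mul_I hδ.ne').intervalIntegrable s t
  rw [← imCLM_apply, ← imCLM.intervalIntegral_comp_comm hint]
  simp only [imCLM_apply, im_inv_ofReal_sub_ofReal_add_mul_I]
  refine integral_eq_sub_of_hasDerivAt (f := fun x => Real.arctan ((x - E) / δ)) (fun x _ => ?_) ?_
  · refine (((hasDerivAt_id' x).sub_const E).div_const δ).arctan.congr_deriv ?_
    field_simp
    ring
  · exact (by fun_prop (disch := intro; positivity) :
      Continuous fun x : ℝ => δ / ((x - E) ^ 2 + δ ^ 2)).intervalIntegrable s t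

end Complex

open Unitary

namespace Matrix

variable {m n : Type*}

lemma map_ofReal_conjTranspose (M : Matrix m n ℝ) : Mᴴ.map ((↑) : ℝ → ℂ) = (M.map (↑))ᴴ :=
  conjTranspose_map _ fun r => (Complex.conj_ofReal r).symm

lemma map_ofReal_mul [Fintype n] (M N : Matrix n n ℝ) :
    (M * N).map ((↑) : ℝ → ℂ) = M.map (↑) * N.map (↑) :=
  Matrix.map_mul (f := Complex.ofRealHom)

variable [Fintype n] [DecidableEq n]

lemma inv_conjStarAlgAut_diagonal {K : Type*} [Field K] [StarRing K]
    (U : unitary (Matrix n n K)) {d : n → K} (hd : ∀ k, d k ≠ 0) :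
    (conjStarAlgAut K _ U (diagonal d))⁻¹ = conjStarAlgAut K _ U (diagonal d⁻¹) := by
  refine inv_eq_left_inv ?_
  rw [← map_mul, diagonal_mul_diagonal, ← map_one (conjStarAlgAut K _ U), ← diagonal_one]
  simp [hd]

lemma inv_conjStarAlgAut_diagonal_sub_smul_one {K : Type*} [Field K] [StarRing K]
    (U : unitary (Matrix n n K)) {d : n → K} {z : K} (hd : ∀ k, d k - z ≠ 0) :
    (conjStarAlgAut K _ U (diagonal d) - z • 1)⁻¹ =
      conjStarAlgAut K _ U (diagonal fun k => (d k - z)⁻¹) := by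
  rw [← map_one (conjStarAlgAut K _ U), ← map_smul, ← map_sub, smul_one_eq_diagonal,
    diagonal_sub, inv_conjStarAlgAut_diagonal U hd]
  rfl

lemma integral_mul_diagonal_mul_apply {l : Type*} (A : Matrix l n ℂ) (B : Matrix n m ℂ)
    {f : n → ℝ → ℂ} {s t : ℝ} (hf : ∀ k, IntervalIntegrable (f k) MeasureTheory.volume s t)
    (i : l) (j : m) :
    ∫ x in s..t, (A * diagonal (fun k => f k x) * B) i j =
      (A * diagonal (fun k => ∫ x in s..t, f k x) * B) i j := by
  simp only [mul_apply (N := B), mul_diagonal]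
  rw [integral_finsetSum fun k _ => ((hf k).const_mul _).mul_const _]
  simp only [integral_mul_const, integral_const_mul]

lemma map_ofReal_mem_unitaryGroup {U : Matrix n n ℝ} (hU : U ∈ unitaryGroup n ℝ) :
    U.map ((↑) : ℝ → ℂ) ∈ unitaryGroup n ℂ := by
  rw [mem_unitaryGroup_iff] at hU ⊢
  rw [star_eq_conjTranspose, ← map_ofReal_conjTranspose, ← map_ofReal_mul, ← star_eq_conjTranspose,
    hU, Matrix.map_one _ Complex.ofReal_zero Complex.ofReal_one]

noncomputable def unitaryMapOfReal (U : unitary (Matrix n n ℝ)) : unitary (Matrix n n ℂ) :=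
  ⟨_, map_ofReal_mem_unitaryGroup U.2⟩

lemma map_ofReal_conjStarAlgAut (U : unitary (Matrix n n ℝ)) (M : Matrix n n ℝ) :
    (conjStarAlgAut ℝ _ U M).map ((↑) : ℝ → ℂ) =
      conjStarAlgAut ℂ _ (unitaryMapOfReal U) (M.map (↑)) := by
  simp only [conjStarAlgAut_apply, map_ofReal_mul, star_eq_conjTranspose, map_ofReal_conjTranspose]
  rfl

end Matrix

lemma matIm_conjStarAlgAut {N : ℕ} (U : unitary (Matrix (Fin N) (Fin N) ℂ))
    (M : Matrix (Fin N) (Fin N) ℂ) :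
    matIm (conjStarAlgAut ℂ _ U M) = conjStarAlgAut ℂ _ U (matIm M) := by
  simp only [matIm, ← star_eq_conjTranspose, map_star, map_sub, map_smul]

lemma matIm_diagonal {N : ℕ} (g : Fin N → ℂ) :
    matIm (diagonal g) = diagonal fun k => ((g k).im : ℂ) := by
  rw [matIm, diagonal_conjTranspose, diagonal_sub, ← diagonal_smul]
  congr 1
  ext k
  simp only [Pi.smul_apply, Pi.star_apply, smul_eq_mul]
  rw [RCLike.star_def, Complex.sub_conj]
  field_simp
  norm_cast

namespace Matrix.IsHermitian

lemma map_ofReal_eq_conjStarAlgAut {n : Type*} [Fintype n] [DecidableEq n] {X : Matrix n n ℝ}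
    (hX : X.IsHermitian) :
    X.map ((↑) : ℝ → ℂ) = conjStarAlgAut ℂ _ (unitaryMapOfReal hX.eigenvectorUnitary)
      (diagonal fun k => (hX.eigenvalues k : ℂ)) := by
  conv_lhs => rw [hX.spectral_theorem]
  rw [map_ofReal_conjStarAlgAut, diagonal_map Complex.ofReal_zero]
  rfl

lemma resolventInt_eq_conjStarAlgAut {N : ℕ} {X : Matrix (Fin N) (Fin N) ℝ} (hX : X.IsHermitian)
    {δ : ℝ} (hδ : δ ≠ 0) (s t : ℝ) :
    resolventInt X δ s t = conjStarAlgAut ℂ _ (unitaryMapOfReal hX.eigenvectorUnitary)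
      (diagonal fun k => ∫ x in s..t, ((hX.eigenvalues k : ℂ) - (x + δ * Complex.I))⁻¹) := by
  ext i j
  simp_rw [resolventInt, of_apply, hX.map_ofReal_eq_conjStarAlgAut,
    inv_conjStarAlgAut_diagonal_sub_smul_one _
      fun k => Complex.ofReal_sub_ofReal_add_mul_I_ne_zero hδ _, conjStarAlgAut_apply]
  exact integral_mul_diagonal_mul_apply _ _
    (fun k => (Complex.continuous_inv_ofReal_sub_ofReal_add_mul_I hδ).intervalIntegrable s t) i j

lemma map_ofReal_specProj {N : ℕ} {X : Matrix (Fin N) (Fin N) ℝ} (hX : X.IsHermitian) (a b : ℝ) :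
    (specProj X hX a b).map ((↑) : ℝ → ℂ) =
      conjStarAlgAut ℂ _ (unitaryMapOfReal hX.eigenvectorUnitary)
        (diagonal fun k => ((if hX.eigenvalues k ∈ Set.Icc a b then 1 else 0 : ℝ) : ℂ)) := by
  rw [show specProj X hX a b = conjStarAlgAut ℝ _ hX.eigenvectorUnitary _ from rfl,
    map_ofReal_conjStarAlgAut, diagonal_map Complex.ofReal_zero]

end Matrix.IsHermitian

/-- `P ≤ (1 + 2δ/γ) (1/π) Im ∫_{a-γ}^{b+γ} (X - λ - iδ)⁻¹ dλ`
in the positive semidefinite order. -/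
theorem stmt7 {N : ℕ} (X : Matrix (Fin N) (Fin N) ℝ) (hX : X.IsHermitian)
    (a b γ δ : ℝ) (hab : a < b) (hδ : 0 < δ) (hγδ : δ ≤ γ) :
    (((1 + 2 * δ / γ) * (1 / Real.pi)) • matIm (resolventInt X δ (a - γ) (b + γ)) -
      (specProj X hX a b).map (fun r => (r : ℂ))).PosSemidef := by
  rw [hX.resolventInt_eq_conjStarAlgAut hδ.ne', hX.map_ofReal_specProj, matIm_conjStarAlgAut,
    ← Complex.coe_smul, matIm_diagonal, ← map_smul, ← map_sub, ← diagonal_smul, diagonal_sub]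
  refine (posSemidef_diagonal_iff.2 fun k => ?_).mul_mul_conjTranspose_same _
  have := Real.indicator_le_arctan_window (E := hX.eigenvalues k) hab.le hδ hγδ
  simp only [Pi.smul_apply, Complex.integral_im_inv_ofReal_sub_ofReal_add_mul_I hδ]
  rw [smul_eq_mul, ← Complex.ofReal_mul, ← Complex.ofReal_sub, Complex.zero_le_real, sub_nonneg]
  exact this
end

section
/- Let E ⊆ R^N be an m-dimensional subspace whose orthogonal projection P_E satisfies max_x (P_E)_{xx} ≤ Cm/N for some C > 0. Then for every 0 < κ < 1 and every 0 < ν < 1 with 4eC·ν·log(e/ν) ≤ κ^2, there exists a unit vector v ∈ E such that for every subset A ⊆ [N] with |A| ≤ νN, ∑_{j∈A} v_j^2 ≤ κ^2. -/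
/-!
Pick an orthonormal basis `u₁, …, u_m` of `E` and random signs `ε`, and put
`v = m^{-1/2} ∑ εₖ uₖ`, a unit vector of `E`. Each coordinate `v_j` is a Rademacher sum of variance
`(P_E)_{jj} / m ≤ C / N`, so by a Chernoff bound the average over `ε` of `∑_j (v_j² - a)₊` is at
most `6 C exp(-a N / 2C)`; fix signs doing at least as well as the average. For `|A| ≤ ν N`,
`∑_{j ∈ A} v_j² ≤ |A| a + ∑_j (v_j² - a)₊`, and `a = κ² / (2 ν N)` makes both terms at most `κ²/2`.
-/

open Finset Real

lemma sq_le_four_div_sq_mul_exp {y l : ℝ} (hy : 0 ≤ y) (hl : 0 < l) :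
    y ^ 2 ≤ 4 / l ^ 2 * exp (l * y) := by
  have h : l * y / 2 ≤ exp (l * y / 2) := by linarith [add_one_le_exp (l * y / 2)]
  have hsq : (l * y / 2) ^ 2 ≤ exp (l * y) :=
    calc (l * y / 2) ^ 2 ≤ exp (l * y / 2) ^ 2 := pow_le_pow_left₀ (by positivity) h 2
      _ = exp (l * y) := by rw [← exp_nat_mul]; congr 1; push_cast; ring
  rw [div_mul_eq_mul_div, le_div_iff₀ (by positivity)]
  nlinarith

lemma le_exp_mul_div {y l : ℝ} (hl : 0 < l) : y ≤ exp (l * y) / l := by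
  rw [le_div_iff₀ hl]
  linarith [add_one_le_exp (l * y)]

-- Bounding the tail by an exponential in `|x|` reduces it to moment generating functions.
lemma max_sq_sub_sq_le {x s l : ℝ} (hs : 0 ≤ s) (hl : 0 < l) :
    max (x ^ 2 - s ^ 2) 0 ≤ (4 / l ^ 2 + 2 * s / l) * exp (l * (|x| - s)) := by
  rcases le_or_gt |x| s with hxs | hxs
  · rw [max_eq_right (by nlinarith [sq_abs x, abs_nonneg x])]
    positivity
  · set y := |x| - s
    have hy : 0 ≤ y := by linarith
    calc max (x ^ 2 - s ^ 2) 0 = y ^ 2 + 2 * s * y := by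
          rw [max_eq_left (by nlinarith [sq_abs x, abs_nonneg x])]
          rw [← sq_abs x]; ring
      _ ≤ 4 / l ^ 2 * exp (l * y) + 2 * s * (exp (l * y) / l) := by
          gcongr
          · exact sq_le_four_div_sq_mul_exp hy hl
          · exact le_exp_mul_div hl
      _ = (4 / l ^ 2 + 2 * s / l) * exp (l * y) := by ring

noncomputable def boolSign (b : Bool) : ℝ := if b then 1 else -1

@[simp] lemma boolSign_sq (b : Bool) : boolSign b ^ 2 = 1 := by
  cases b <;> norm_num [boolSign]

section RandomSigns

variable {ι : Type*} [Fintype ι]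

noncomputable def signedSum (ε : ι → Bool) (c : ι → ℝ) : ℝ := ∑ k, boolSign (ε k) * c k

variable [DecidableEq ι]

lemma sum_exp_signedSum_le (t : ι → ℝ) :
    ∑ ε : ι → Bool, exp (signedSum ε t) ≤ 2 ^ Fintype.card ι * exp (∑ k, t k ^ 2 / 2) :=
  calc ∑ ε : ι → Bool, exp (signedSum ε t)
      = ∏ k, ∑ b : Bool, exp (boolSign b * t k) := by
        simp only [signedSum, exp_sum]
        exact (Fintype.prod_sum fun k (b : Bool) => exp (boolSign b * t k)).symm
    _ = ∏ k, (exp (t k) + exp (-t k)) := by simp [boolSign]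
    _ ≤ ∏ k, 2 * exp (t k ^ 2 / 2) := by
        gcongr with k
        have := cosh_le_exp_half_sq (t k)
        rw [cosh_eq] at this
        linarith
    _ = 2 ^ Fintype.card ι * exp (∑ k, t k ^ 2 / 2) := by
        rw [prod_mul_distrib, prod_const, exp_sum, card_univ]

lemma sum_exp_mul_signedSum_le (c : ι → ℝ) (μ : ℝ) :
    ∑ ε : ι → Bool, exp (μ * signedSum ε c)
      ≤ 2 ^ Fintype.card ι * exp (μ ^ 2 * (∑ k, c k ^ 2) / 2) := by
  convert sum_exp_signedSum_le (fun k => μ * c k) using 3 with ε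
  · simp only [signedSum, mul_sum]
    ring_nf
  · simp only [mul_pow, ← sum_div, ← mul_sum]

lemma sum_max_sq_signedSum_sub_sq_le (c : ι → ℝ) {s l : ℝ} (hs : 0 ≤ s) (hl : 0 < l) :
    ∑ ε : ι → Bool, max (signedSum ε c ^ 2 - s ^ 2) 0
      ≤ 2 ^ Fintype.card ι * (2 * (4 / l ^ 2 + 2 * s / l) *
          exp (l ^ 2 * (∑ k, c k ^ 2) / 2 - l * s)) := by
  set K := 4 / l ^ 2 + 2 * s / l
  set M := 2 ^ Fintype.card ι * exp (l ^ 2 * (∑ k, c k ^ 2) / 2)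
  have hpt : ∀ ε : ι → Bool, max (signedSum ε c ^ 2 - s ^ 2) 0
      ≤ K * exp (-(l * s)) * (exp (l * signedSum ε c) + exp (-l * signedSum ε c)) := by
    intro ε
    refine (max_sq_sub_sq_le hs hl).trans ?_
    rw [show l * (|signedSum ε c| - s) = -(l * s) + l * |signedSum ε c| by ring, exp_add,
      ← mul_assoc]
    gcongr
    simpa only [mul_neg, neg_mul] using
      apply_abs_le_add_of_nonneg (fun x => (exp_pos (l * x)).le) (signedSum ε c)
  calc ∑ ε : ι → Bool, max (signedSum ε c ^ 2 - s ^ 2) 0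
      ≤ K * exp (-(l * s)) * (∑ ε : ι → Bool, exp (l * signedSum ε c)
          + ∑ ε : ι → Bool, exp (-l * signedSum ε c)) := by
        rw [← sum_add_distrib, mul_sum]
        exact sum_le_sum fun ε _ => hpt ε
    _ ≤ K * exp (-(l * s)) * (M + M) := by
        gcongr
        · exact sum_exp_mul_signedSum_le c l
        · simpa only [neg_sq] using sum_exp_mul_signedSum_le c (-l)
    _ = 2 ^ Fintype.card ι * (2 * K * exp (l ^ 2 * (∑ k, c k ^ 2) / 2 - l * s)) := by
        rw [sub_eq_add_neg, exp_add]
        ring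

lemma sum_max_sq_signedSum_sub_le {c : ι → ℝ} {σ2 a : ℝ} (hc : ∑ k, c k ^ 2 ≤ σ2)
    (hσ : 0 < σ2) (ha : 4 * σ2 ≤ a) :
    ∑ ε : ι → Bool, max (signedSum ε c ^ 2 - a) 0
      ≤ 2 ^ Fintype.card ι * (6 * σ2 * exp (-(a / (2 * σ2)))) := by
  have ha0 : 0 < a := by linarith
  have hs : √a ^ 2 = a := sq_sqrt ha0.le
  have hl : 0 < √a / σ2 := by positivity
  have h := sum_max_sq_signedSum_sub_sq_le c (sqrt_nonneg a) hl
  rw [hs] at h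
  have hK : 4 / (√a / σ2) ^ 2 + 2 * √a / (√a / σ2) ≤ 3 * σ2 := by
    have : 4 * σ2 ^ 2 / a ≤ σ2 := by rw [div_le_iff₀ ha0]; nlinarith
    rw [div_pow, hs, mul_div_assoc, div_div_cancel₀ (by positivity), div_div_eq_mul_div]
    linarith
  have hexp : (√a / σ2) ^ 2 * (∑ k, c k ^ 2) / 2 - √a / σ2 * √a ≤ -(a / (2 * σ2)) :=
    calc (√a / σ2) ^ 2 * (∑ k, c k ^ 2) / 2 - √a / σ2 * √a
        ≤ (√a / σ2) ^ 2 * σ2 / 2 - √a / σ2 * √a := by gcongr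
      _ = -(a / (2 * σ2)) := by
        rw [div_pow, hs, div_mul_eq_mul_div √a σ2 √a, mul_self_sqrt ha0.le]
        field_simp
        ring
  refine h.trans ?_
  gcongr 2 ^ _ * ?_
  calc 2 * (4 / (√a / σ2) ^ 2 + 2 * √a / (√a / σ2)) *
        exp ((√a / σ2) ^ 2 * (∑ k, c k ^ 2) / 2 - √a / σ2 * √a)
      ≤ 2 * (3 * σ2) * exp (-(a / (2 * σ2))) := by gcongr
    _ = 6 * σ2 * exp (-(a / (2 * σ2))) := by ring

lemma exists_signs_sum_sq_signedSum_le {J : Type*} [Fintype J] (c : J → ι → ℝ) {σ2 a : ℝ}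
    (hc : ∀ j, ∑ k, c j k ^ 2 ≤ σ2) (hσ : 0 < σ2) (ha : 4 * σ2 ≤ a) :
    ∃ ε : ι → Bool, ∀ A : Finset J, ∑ j ∈ A, signedSum ε (c j) ^ 2
      ≤ #A * a + Fintype.card J * (6 * σ2 * exp (-(a / (2 * σ2)))) := by
  set B := Fintype.card J * (6 * σ2 * exp (-(a / (2 * σ2))))
  have havg : ∑ ε : ι → Bool, ∑ j, max (signedSum ε (c j) ^ 2 - a) 0 ≤ ∑ _ε : ι → Bool, B := by
    rw [sum_comm, sum_const, card_univ, Fintype.card_fun, Fintype.card_bool, nsmul_eq_mul]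
    calc ∑ j, ∑ ε : ι → Bool, max (signedSum ε (c j) ^ 2 - a) 0
        ≤ ∑ _j : J, 2 ^ Fintype.card ι * (6 * σ2 * exp (-(a / (2 * σ2)))) :=
          sum_le_sum fun j _ => sum_max_sq_signedSum_sub_le (hc j) hσ ha
      _ = _ := by simp only [sum_const, card_univ, nsmul_eq_mul, B]; push_cast; ring
  obtain ⟨ε, -, hε⟩ := exists_le_of_sum_le univ_nonempty havg
  refine ⟨ε, fun A => ?_⟩
  calc ∑ j ∈ A, signedSum ε (c j) ^ 2
      ≤ ∑ j ∈ A, (a + max (signedSum ε (c j) ^ 2 - a) 0) :=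
        sum_le_sum fun j _ => by linarith [le_max_left (signedSum ε (c j) ^ 2 - a) 0]
    _ = #A * a + ∑ j ∈ A, max (signedSum ε (c j) ^ 2 - a) 0 := by
        rw [sum_add_distrib, sum_const, nsmul_eq_mul]
    _ ≤ #A * a + B := by
        gcongr
        exact (sum_le_sum_of_subset_of_nonneg (subset_univ A) fun j _ _ => le_max_right _ _).trans
          hε

end RandomSigns

lemma one_le_log_exp_one_div {ν : ℝ} (hν0 : 0 < ν) (hν1 : ν ≤ 1) : 1 ≤ log (exp 1 / ν) := by
  rw [log_div (exp_ne_zero 1) hν0.ne', log_exp]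
  linarith [log_nonpos hν0.le hν1]

lemma four_mul_exp_one_mul_le {C κ ν : ℝ} (hC : 0 < C) (hν0 : 0 < ν) (hν1 : ν ≤ 1)
    (h : 4 * exp 1 * C * ν * log (exp 1 / ν) ≤ κ ^ 2) : 4 * exp 1 * C * ν ≤ κ ^ 2 :=
  (le_mul_of_one_le_right (by positivity) (one_le_log_exp_one_div hν0 hν1)).trans h

lemma six_mul_exp_neg_le {C κ ν : ℝ} (hC : 0 < C) (hν0 : 0 < ν) (hν1 : ν ≤ 1)
    (h : 4 * exp 1 * C * ν * log (exp 1 / ν) ≤ κ ^ 2) :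
    6 * C * exp (-(κ ^ 2 / (4 * ν * C))) ≤ κ ^ 2 / 2 := by
  set L := log (exp 1 / ν)
  have hL : 1 ≤ L := one_le_log_exp_one_div hν0 hν1
  have he : 2 ≤ exp 1 := by linarith [add_one_le_exp (1 : ℝ)]
  have hLt : L ≤ κ ^ 2 / (4 * ν * C) := by
    rw [le_div_iff₀ (by positivity)]; nlinarith [mul_pos hC hν0]
  have hexp : exp 1 / ν ≤ exp (κ ^ 2 / (4 * ν * C)) := by
    rw [← exp_log (by positivity : 0 < exp 1 / ν)]; exact exp_le_exp.2 hLt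
  have hκ : 4 * exp 1 * C * ν ≤ κ ^ 2 := four_mul_exp_one_mul_le hC hν0 hν1 h
  have : 12 * C ≤ κ ^ 2 * exp (κ ^ 2 / (4 * ν * C)) :=
    calc 12 * C ≤ 4 * exp 1 * C * ν * (exp 1 / ν) := by
          field_simp; nlinarith
      _ ≤ κ ^ 2 * exp (κ ^ 2 / (4 * ν * C)) := by gcongr
  rw [exp_neg, ← div_eq_mul_inv, div_le_iff₀ (exp_pos _)]
  linarith

lemma norm_sum_boolSign_div_sqrt_card_smul {ι F : Type*} [Fintype ι] [Nonempty ι]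
    [NormedAddCommGroup F] [InnerProductSpace ℝ F] {v : ι → F} (hv : Orthonormal ℝ v)
    (ε : ι → Bool) : ‖∑ k, (boolSign (ε k) / √(Fintype.card ι)) • v k‖ = 1 := by
  have hcard : (0 : ℝ) < Fintype.card ι := by exact_mod_cast Fintype.card_pos
  rw [norm_eq_sqrt_real_inner, sqrt_eq_one, hv.inner_sum]
  simp only [conj_trivial, ← sq, div_pow, boolSign_sq, sq_sqrt hcard.le, sum_const, card_univ,
    nsmul_eq_mul]
  field_simp

lemma orthogonalProjectionOnto_single_apply_self {n ι : Type*} [Fintype n] [DecidableEq n]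
    [Fintype ι] {E : Submodule ℝ (EuclideanSpace ℝ n)} (b : OrthonormalBasis ι ℝ E) (j : n) :
    (E.orthogonalProjectionOnto (EuclideanSpace.single j 1) : EuclideanSpace ℝ n) j =
      ∑ k, (b k : EuclideanSpace ℝ n) j ^ 2 := by
  rw [b.orthogonalProjectionOnto_apply_eq_sum]
  simp [EuclideanSpace.inner_single_right, sq]

lemma four_mul_div_le_sq_div {N C κ ν : ℝ} (hN : 0 < N) (hC : 0 < C) (hν0 : 0 < ν)
    (hν1 : ν ≤ 1) (h : 4 * exp 1 * C * ν * log (exp 1 / ν) ≤ κ ^ 2) :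
    4 * (C / N) ≤ κ ^ 2 / (2 * ν * N) :=
  calc 4 * (C / N) = 8 * C * ν / (2 * ν * N) := by field_simp; ring
    _ ≤ 4 * exp 1 * C * ν / (2 * ν * N) := by gcongr; linarith [add_one_le_exp (1 : ℝ)]
    _ ≤ κ ^ 2 / (2 * ν * N) := by gcongr; exact four_mul_exp_one_mul_le hC hν0 hν1 h

lemma mul_add_mul_exp_le {N C κ ν t : ℝ} (hN : 0 < N) (hC : 0 < C) (hν0 : 0 < ν)
    (hν1 : ν ≤ 1) (h : 4 * exp 1 * C * ν * log (exp 1 / ν) ≤ κ ^ 2) (ht : t ≤ ν * N) :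
    t * (κ ^ 2 / (2 * ν * N)) + N * (6 * (C / N) * exp (-(κ ^ 2 / (2 * ν * N) / (2 * (C / N)))))
      ≤ κ ^ 2 := by
  have hA : t * (κ ^ 2 / (2 * ν * N)) ≤ κ ^ 2 / 2 :=
    calc t * (κ ^ 2 / (2 * ν * N)) ≤ ν * N * (κ ^ 2 / (2 * ν * N)) := by gcongr
      _ = κ ^ 2 / 2 := by field_simp
  have hB : N * (6 * (C / N) * exp (-(κ ^ 2 / (2 * ν * N) / (2 * (C / N)))))
      = 6 * C * exp (-(κ ^ 2 / (4 * ν * C))) := by field_simp; ring_nf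
  linarith [six_mul_exp_neg_le hC hν0 hν1 h]

lemma exists_mem_norm_eq_one_apply_eq_signedSum {n ι : Type*} [Fintype n] [Fintype ι]
    [Nonempty ι] {E : Submodule ℝ (EuclideanSpace ℝ n)}
    (b : OrthonormalBasis ι ℝ E) (ε : ι → Bool) :
    ∃ v ∈ E, ‖v‖ = 1 ∧ ∀ j, v j = signedSum ε fun k => (b k : EuclideanSpace ℝ n) j /
      √(Fintype.card ι) := by
  refine ⟨∑ k, (boolSign (ε k) / √(Fintype.card ι)) • (b k : EuclideanSpace ℝ n),
    sum_mem fun k _ => E.smul_mem _ (b k).2,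
    norm_sum_boolSign_div_sqrt_card_smul (b.orthonormal.comp_linearIsometry E.subtypeₗᵢ) ε,
    fun j => ?_⟩
  simp [signedSum, div_mul_eq_mul_div, mul_div_assoc']

theorem stmt11_general {N m : ℕ} (hm : 0 < m) (E : Submodule ℝ (EuclideanSpace ℝ (Fin N)))
    (hdim : Module.finrank ℝ E = m) (C : ℝ) (hC : 0 < C)
    (hdiag : ∀ x : Fin N,
      ((Submodule.orthogonalProjection E (EuclideanSpace.single x 1)) : EuclideanSpace ℝ (Fin N)) x ≤
        C * m / N)
    (κ ν : ℝ) (hν0 : 0 < ν) (hν1 : ν < 1)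
    (hνκ : 4 * Real.exp 1 * C * ν * Real.log (Real.exp 1 / ν) ≤ κ ^ 2) :
    ∃ v : EuclideanSpace ℝ (Fin N), v ∈ E ∧ ‖v‖ = 1 ∧
      ∀ A : Finset (Fin N), (A.card : ℝ) ≤ ν * N → ∑ j ∈ A, v j ^ 2 ≤ κ ^ 2 := by
  have hmR : (0 : ℝ) < m := by exact_mod_cast hm
  have hN : (0 : ℝ) < N := by
    have := Submodule.finrank_le E
    rw [hdim, finrank_euclideanSpace_fin] at this
    exact_mod_cast hm.trans_le this
  have : Nonempty (Fin m) := Fin.pos_iff_nonempty.mp hm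
  let b : OrthonormalBasis (Fin m) ℝ E := (stdOrthonormalBasis ℝ E).reindex (finCongr hdim)
  have hc : ∀ j, ∑ k, ((b k : EuclideanSpace ℝ (Fin N)) j / √m) ^ 2 ≤ C / N := fun j =>
    calc ∑ k, ((b k : EuclideanSpace ℝ (Fin N)) j / √m) ^ 2
        = (E.orthogonalProjectionOnto (EuclideanSpace.single j 1) : EuclideanSpace ℝ (Fin N)) j
          / m := by
          simp only [div_pow, sq_sqrt hmR.le, ← sum_div,
            orthogonalProjectionOnto_single_apply_self b j]
      _ ≤ C * m / N / m := by gcongr; exact hdiag j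
      _ = C / N := by field_simp
  obtain ⟨ε, hε⟩ := exists_signs_sum_sq_signedSum_le _ hc (by positivity)
    (four_mul_div_le_sq_div hN hC hν0 hν1.le hνκ)
  obtain ⟨v, hvE, hv1, hv⟩ := exists_mem_norm_eq_one_apply_eq_signedSum b ε
  refine ⟨v, hvE, hv1, fun A hA => ?_⟩
  simp only [hv, Fintype.card_fin] at hε ⊢
  exact (hε A).trans (mul_add_mul_exp_le hN hC hν0 hν1.le hνκ hA)

/-- If `E ⊆ ℝ^N` is an `m`-dimensional subspace whose orthogonal projection
has diagonal entries at most `C m / N`, then for `0 < κ < 1` and `0 < ν < 1` with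
`4 e C ν log(e/ν) ≤ κ²`, there is a unit vector `v ∈ E` with `∑_{j ∈ A} v_j² ≤ κ²`
whenever `|A| ≤ ν N`. -/
theorem stmt11 {N m : ℕ} (hm : 0 < m) (E : Submodule ℝ (EuclideanSpace ℝ (Fin N)))
    (hdim : Module.finrank ℝ E = m) (C : ℝ) (hC : 0 < C)
    (hdiag : ∀ x : Fin N,
      ((Submodule.orthogonalProjection E (EuclideanSpace.single x 1)) : EuclideanSpace ℝ (Fin N)) x ≤
        C * m / N)
    (κ ν : ℝ) (hκ0 : 0 < κ) (hκ1 : κ < 1) (hν0 : 0 < ν) (hν1 : ν < 1)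
    (hνκ : 4 * Real.exp 1 * C * ν * Real.log (Real.exp 1 / ν) ≤ κ ^ 2) :
    ∃ v : EuclideanSpace ℝ (Fin N), v ∈ E ∧ ‖v‖ = 1 ∧
      ∀ A : Finset (Fin N), (A.card : ℝ) ≤ ν * N → ∑ j ∈ A, v j ^ 2 ≤ κ ^ 2 :=
  stmt11_general hm E hdim C hC hdiag κ ν hν0 hν1 hνκ
end

section
/- For 0 ≤ u ≤ 4, the integral ∫_{2−u}^{2} (1/(2π))·√((2−x)(2+x)) dx is bounded below by (2√(1−u/4)/(3π))·u^{3/2} and above by (2/(3π))·u^{3/2}. -/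
/-!
Substituting `t = 2 - x` turns the integrand into `√(t (4 - t)) / (2π)` on `[0, u]`, where
`√(4 - u) √t ≤ √(t (4 - t)) ≤ 2 √t`; and `∫₀ᵘ √t = (2/3) u^{3/2}`.
-/

open intervalIntegral

lemma integral_sqrt (u : ℝ) :
    ∫ t in (0 : ℝ)..u, √t = 2 / 3 * u ^ ((3 : ℝ) / 2) := by
  simp_rw [Real.sqrt_eq_rpow]
  rw [integral_rpow (Or.inl (by norm_num)), Real.zero_rpow (by norm_num)]
  norm_num
  ring

lemma sqrt_four_sub_mul_sqrt_le {t u : ℝ} (ht : 0 ≤ t) (htu : t ≤ u) :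
    √(4 - u) * √t ≤ √(t * (4 - t)) := by
  rw [← Real.sqrt_mul' _ ht]
  exact Real.sqrt_le_sqrt (by nlinarith)

lemma sqrt_mul_four_sub_le {t : ℝ} (ht : 0 ≤ t) : √(t * (4 - t)) ≤ 2 * √t := by
  rw [show 2 * √t = √(t * 4) by
    rw [Real.sqrt_mul ht, show (4 : ℝ) = 2 ^ 2 by norm_num, Real.sqrt_sq zero_le_two, mul_comm]]
  exact Real.sqrt_le_sqrt (by nlinarith)

lemma intervalIntegrable_sqrt_mul_four_sub (a b : ℝ) :
    IntervalIntegrable (fun t => √(t * (4 - t))) MeasureTheory.volume a b :=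
  (by fun_prop : Continuous fun t : ℝ => √(t * (4 - t))).intervalIntegrable a b

lemma le_integral_sqrt_mul_four_sub {u : ℝ} (hu : 0 ≤ u) :
    2 / 3 * √(4 - u) * u ^ ((3 : ℝ) / 2) ≤ ∫ t in (0 : ℝ)..u, √(t * (4 - t)) := by
  calc 2 / 3 * √(4 - u) * u ^ ((3 : ℝ) / 2)
      = ∫ t in (0 : ℝ)..u, √(4 - u) * √t := by
        rw [integral_const_mul, integral_sqrt u]; ring
    _ ≤ ∫ t in (0 : ℝ)..u, √(t * (4 - t)) :=
        integral_mono_on hu (Continuous.intervalIntegrable (by fun_prop) _ _)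
          (intervalIntegrable_sqrt_mul_four_sub _ _)
          fun t ht => sqrt_four_sub_mul_sqrt_le ht.1 ht.2

lemma integral_sqrt_mul_four_sub_le {u : ℝ} (hu : 0 ≤ u) :
    ∫ t in (0 : ℝ)..u, √(t * (4 - t)) ≤ 4 / 3 * u ^ ((3 : ℝ) / 2) := by
  calc ∫ t in (0 : ℝ)..u, √(t * (4 - t))
      ≤ ∫ t in (0 : ℝ)..u, 2 * √t :=
        integral_mono_on hu (intervalIntegrable_sqrt_mul_four_sub _ _)
          (Continuous.intervalIntegrable (by fun_prop) _ _)
          fun t ht => sqrt_mul_four_sub_le ht.1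
    _ = 4 / 3 * u ^ ((3 : ℝ) / 2) := by
        rw [integral_const_mul, integral_sqrt u]; ring

lemma integral_semicircle_density_eq (u : ℝ) :
    ∫ x in (2 - u)..2, 1 / (2 * Real.pi) * √((2 - x) * (2 + x)) =
      1 / (2 * Real.pi) * ∫ t in (0 : ℝ)..u, √(t * (4 - t)) := by
  rw [integral_const_mul]
  congr 1
  have h := integral_comp_sub_left (a := 2 - u) (b := 2) (fun t => √(t * (4 - t))) 2
  simp only [sub_self, sub_sub_cancel] at h
  rw [← h]
  congr 1 with x
  ring_nf

theorem stmt12_general (u : ℝ) (hu0 : 0 ≤ u) :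
    2 * Real.sqrt (1 - u / 4) / (3 * Real.pi) * u ^ ((3 : ℝ) / 2) ≤
      (∫ x in (2 - u)..2, (1 / (2 * Real.pi)) * Real.sqrt ((2 - x) * (2 + x))) ∧
    (∫ x in (2 - u)..2, (1 / (2 * Real.pi)) * Real.sqrt ((2 - x) * (2 + x))) ≤
      2 / (3 * Real.pi) * u ^ ((3 : ℝ) / 2) := by
  have hsqrt : 2 * √(1 - u / 4) = √(4 - u) := by
    rw [show (4 : ℝ) - u = 2 ^ 2 * (1 - u / 4) by ring, Real.sqrt_mul (by positivity),
      Real.sqrt_sq zero_le_two]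
  rw [integral_semicircle_density_eq]
  constructor
  · calc 2 * √(1 - u / 4) / (3 * Real.pi) * u ^ ((3 : ℝ) / 2)
        = 1 / (2 * Real.pi) * (2 / 3 * √(4 - u) * u ^ ((3 : ℝ) / 2)) := by
          rw [← hsqrt]; field_simp
      _ ≤ _ := by gcongr; exact le_integral_sqrt_mul_four_sub hu0
  · calc 1 / (2 * Real.pi) * ∫ t in (0 : ℝ)..u, √(t * (4 - t))
        ≤ 1 / (2 * Real.pi) * (4 / 3 * u ^ ((3 : ℝ) / 2)) := by
          gcongr; exact integral_sqrt_mul_four_sub_le hu0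
      _ = 2 / (3 * Real.pi) * u ^ ((3 : ℝ) / 2) := by field_simp; ring

/-- For `0 ≤ u ≤ 4`,
`(2√(1-u/4)/(3π)) u^{3/2} ≤ ∫_{2-u}^{2} (1/(2π)) √((2-x)(2+x)) dx ≤ (2/(3π)) u^{3/2}`. -/
theorem stmt12 (u : ℝ) (hu0 : 0 ≤ u) (hu4 : u ≤ 4) :
    2 * Real.sqrt (1 - u / 4) / (3 * Real.pi) * u ^ ((3 : ℝ) / 2) ≤
      (∫ x in (2 - u)..2, (1 / (2 * Real.pi)) * Real.sqrt ((2 - x) * (2 + x))) ∧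
    (∫ x in (2 - u)..2, (1 / (2 * Real.pi)) * Real.sqrt ((2 - x) * (2 + x))) ≤
      2 / (3 * Real.pi) * u ^ ((3 : ℝ) / 2) :=
  stmt12_general u hu0
end

section
/- For any unit vector v ∈ S^{N-1}, any 0 < ε < 1, any 0 < κ < 1−ε, any positive integer L ≤ N, and any N×N matrix X: if ∑_{j∈A} v_j^2 ≤ κ^2 for all A ⊆ [N] with |A| ≤ L, then ‖Xv‖_2 ≤ L^{-1/2}·sup_{‖w‖_∞ ≤ 1}‖Xw‖_2 + κ‖X‖, where the decomposition v = v^+ + v^- with v^+_i = v_i·1_{|v_i| > L^{-1/2}} is used. -/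
/-!
Split `v = v⁺ + v⁻`, where `v⁺` keeps the coordinates with `v_j² > 1/L`. Since `‖v‖ = 1` there are
at most `L` such coordinates, so delocalization gives `‖v⁺‖ ≤ κ` and hence `‖X v⁺‖ ≤ κ ‖X‖`. Every
coordinate of `v⁻` is at most `L^{-1/2}` in absolute value, so `L^{1/2} v⁻` lies in the unit cube of
`ℓ^∞` and `‖X v⁻‖ ≤ L^{-1/2} sup_{‖w‖_∞ ≤ 1} ‖X w‖`.
-/

/-- The ℓ²→ℓ² operator norm of a real `N × N` matrix. -/
noncomputable def opNormR {N : ℕ} (M : Matrix (Fin N) (Fin N) ℝ) : ℝ :=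
  ‖(Matrix.toEuclideanLin M).toContinuousLinearMap‖

open Finset WithLp Matrix

section Vectors

variable {ι : Type*} [Fintype ι]

theorem card_filter_inv_lt_sq_le (v : ι → ℝ) (hv : ∑ j, v j ^ 2 ≤ 1) {L : ℕ} (hL : 0 < L) :
    #{j | (L : ℝ)⁻¹ < v j ^ 2} ≤ L := by
  set S : Finset ι := {j | (L : ℝ)⁻¹ < v j ^ 2}
  have hLR : (0 : ℝ) < L := by exact_mod_cast hL
  have hS : (#S : ℝ) * (L : ℝ)⁻¹ ≤ 1 := calc
    (#S : ℝ) * (L : ℝ)⁻¹ = #S • (L : ℝ)⁻¹ := (nsmul_eq_mul _ _).symm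
    _ ≤ ∑ j ∈ S, v j ^ 2 := card_nsmul_le_sum S _ _ fun j hj => (mem_filter.1 hj).2.le
    _ ≤ ∑ j, v j ^ 2 := sum_le_univ_sum_of_nonneg fun j => sq_nonneg (v j)
    _ ≤ 1 := hv
  rw [← div_eq_mul_inv, div_le_one hLR] at hS
  exact_mod_cast hS

theorem abs_le_rpow_neg_half_of_sq_le_inv {x L : ℝ} (hL : 0 ≤ L) (h : x ^ 2 ≤ L⁻¹) :
    |x| ≤ L ^ (-(1 : ℝ) / 2) := by
  rw [neg_div, Real.rpow_neg hL, ← Real.sqrt_eq_rpow, ← Real.sqrt_inv]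
  exact Real.abs_le_sqrt h

theorem norm_toLp_indicator (S : Finset ι) (v : ι → ℝ) :
    ‖toLp 2 ((S : Set ι).indicator v)‖ = √(∑ j ∈ S, v j ^ 2) := by
  classical
  simp [EuclideanSpace.norm_eq, Set.indicator_apply, apply_ite (· ^ 2)]

end Vectors

section Matrices

variable {m n : Type*} [Fintype m] [Fintype n]

theorem sqrt_sum_sq_sum_mul_eq_norm_toLp_mulVec (X : Matrix m n ℝ) (u : n → ℝ) :
    √(∑ i, (∑ j, X i j * u j) ^ 2) = ‖toLp 2 (X *ᵥ u)‖ := by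
  simp [EuclideanSpace.norm_eq, mulVec, dotProduct]

theorem bddAbove_range_norm_toLp_mulVec (X : Matrix m n ℝ) :
    BddAbove (Set.range fun w : {w : n → ℝ // ∀ j, |w j| ≤ 1} => ‖toLp 2 (X *ᵥ w.1)‖) := by
  let T : (n → ℝ) →L[ℝ] EuclideanSpace ℝ m := LinearMap.toContinuousLinearMap
    ((WithLp.linearEquiv 2 ℝ (m → ℝ)).symm.toLinearMap ∘ₗ X.mulVecLin)
  refine ⟨‖T‖, Set.forall_mem_range.2 fun w => ?_⟩
  have hw : ‖w.1‖ ≤ 1 := (pi_norm_le_iff_of_nonneg zero_le_one).2 w.2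
  calc ‖toLp 2 (X *ᵥ w.1)‖ = ‖T w.1‖ := rfl
    _ ≤ ‖T‖ * ‖w.1‖ := T.le_opNorm w.1
    _ ≤ ‖T‖ := mul_le_of_le_one_right (norm_nonneg T) hw

theorem norm_toLp_mulVec_le_mul_iSup (X : Matrix m n ℝ) {t : ℝ} (ht : 0 < t) {u : n → ℝ}
    (hu : ∀ j, |u j| ≤ t) :
    ‖toLp 2 (X *ᵥ u)‖ ≤ t * ⨆ w : {w : n → ℝ // ∀ j, |w j| ≤ 1}, ‖toLp 2 (X *ᵥ w.1)‖ := by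
  have hw : ∀ j, |(t⁻¹ • u) j| ≤ 1 := fun j => by
    rw [Pi.smul_apply, smul_eq_mul, abs_mul, abs_inv, abs_of_pos ht, inv_mul_le_one₀ ht]
    exact hu j
  rw [← smul_inv_smul₀ ht.ne' u, mulVec_smul, toLp_smul, norm_smul, Real.norm_of_nonneg ht.le]
  exact mul_le_mul_of_nonneg_left
    (le_ciSup (bddAbove_range_norm_toLp_mulVec X) ⟨t⁻¹ • u, hw⟩) ht.le

end Matrices

theorem norm_toLp_mulVec_le_opNormR {N : ℕ} (X : Matrix (Fin N) (Fin N) ℝ) (u : Fin N → ℝ) :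
    ‖toLp 2 (X *ᵥ u)‖ ≤ opNormR X * ‖toLp 2 u‖ :=
  (Matrix.toEuclideanLin X).toContinuousLinearMap.le_opNorm (toLp 2 u)

theorem stmt13_general {N : ℕ} (v : Fin N → ℝ) (hv : ∑ j, v j ^ 2 = 1)
    (κ : ℝ) (hκ0 : 0 < κ)
    (L : ℕ) (hL1 : 1 ≤ L)
    (X : Matrix (Fin N) (Fin N) ℝ)
    (hdeloc : ∀ A : Finset (Fin N), A.card ≤ L → ∑ j ∈ A, v j ^ 2 ≤ κ ^ 2) :
    Real.sqrt (∑ i, (∑ j, X i j * v j) ^ 2) ≤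
      (L : ℝ) ^ (-(1 : ℝ) / 2) *
        (⨆ w : {w : Fin N → ℝ // ∀ i, |w i| ≤ 1},
          Real.sqrt (∑ i, (∑ j, X i j * w.1 j) ^ 2)) +
      κ * opNormR X := by
  have hL : (0 : ℝ) < L := by exact_mod_cast hL1
  set S : Finset (Fin N) := {j | (L : ℝ)⁻¹ < v j ^ 2}
  have hS : #S ≤ L := card_filter_inv_lt_sq_le v hv.le hL1
  have hlarge : ‖toLp 2 (X *ᵥ (S : Set (Fin N)).indicator v)‖ ≤ κ * opNormR X := calc
    _ ≤ opNormR X * √(∑ j ∈ S, v j ^ 2) :=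
      norm_toLp_indicator S v ▸ norm_toLp_mulVec_le_opNormR X _
    _ ≤ opNormR X * κ := by
      gcongr
      · exact norm_nonneg _
      · exact Real.sqrt_le_iff.2 ⟨hκ0.le, hdeloc S hS⟩
    _ = κ * opNormR X := mul_comm _ _
  have hsmall : ‖toLp 2 (X *ᵥ (S : Set (Fin N))ᶜ.indicator v)‖ ≤ (L : ℝ) ^ (-(1 : ℝ) / 2) *
      ⨆ w : {w : Fin N → ℝ // ∀ i, |w i| ≤ 1}, ‖toLp 2 (X *ᵥ w.1)‖ := by
    refine norm_toLp_mulVec_le_mul_iSup X (by positivity) fun j => ?_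
    by_cases hj : j ∈ S
    · simp [hj, Real.rpow_nonneg hL.le]
    · simp only [Set.indicator_of_mem (show j ∈ (S : Set (Fin N))ᶜ from hj)]
      exact abs_le_rpow_neg_half_of_sq_le_inv hL.le (not_lt.1 fun h => hj (by simpa [S] using h))
  simp only [sqrt_sum_sq_sum_mul_eq_norm_toLp_mulVec]
  rw [← Set.indicator_self_add_compl (S : Set (Fin N)) v, mulVec_add, toLp_add, add_comm]
  exact (norm_add_le _ _).trans (add_le_add hsmall hlarge)

/-- If a unit vector `v` is `(L,κ)`-delocalized, then
`‖Xv‖₂ ≤ L^{-1/2} sup_{‖w‖_∞ ≤ 1} ‖Xw‖₂ + κ ‖X‖`. -/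
theorem stmt13 {N : ℕ} (v : Fin N → ℝ) (hv : ∑ j, v j ^ 2 = 1)
    (ε κ : ℝ) (hε0 : 0 < ε) (hε1 : ε < 1) (hκ0 : 0 < κ) (hκ1 : κ < 1 - ε)
    (L : ℕ) (hL1 : 1 ≤ L) (hLN : L ≤ N)
    (X : Matrix (Fin N) (Fin N) ℝ)
    (hdeloc : ∀ A : Finset (Fin N), A.card ≤ L → ∑ j ∈ A, v j ^ 2 ≤ κ ^ 2) :
    Real.sqrt (∑ i, (∑ j, X i j * v j) ^ 2) ≤
      (L : ℝ) ^ (-(1 : ℝ) / 2) *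
        (⨆ w : {w : Fin N → ℝ // ∀ i, |w i| ≤ 1},
          Real.sqrt (∑ i, (∑ j, X i j * w.1 j) ^ 2)) +
      κ * opNormR X :=
  stmt13_general v hv κ hκ0 L hL1 X hdeloc
end
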